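/- All frequencies converge to the average frequency and the relative buffer occupancies tend to zero: ω(t) → ω^avg 𝟏 and δ(t) → 0 as t → ∞. -/

import Mathlib

/-!
For every `μ`, the affine trajectory `x*(t) = (μ t 𝟏, (μ 𝟏 - ωu) / b)` solves the system, with
frequency `C₁ x* + ωu = μ 𝟏` and buffer occupancy `C₂ x* = 0`, so it suffices that the error
`(p, q) = x - x*` tends to zero. It obeys `p' = -a L p + b q`, `q' = -L p`. Since `𝟏ᵀ L = 0` the
sums of `p` and `q` are conserved, and `μ = ωavg` is exactly the choice that makes them vanish at
`t = 0`. On sum-zero vectors the Laplacian of a connected graph is coercive,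
`λ |v|² ≤ vᵀ L v` with `λ > 0`, and then `V = pᵀ L p - 2 c pᵀ q + (b + a c) |q|²` with a small
`c > 0` satisfies `V' ≤ -γ V`; so `V`, and with it `p` and `q`, decay exponentially.
-/

open Matrix MeasureTheory Filter Topology

section DotProduct

variable {ι : Type*} [Fintype ι]

theorem dotProduct_self_nonneg {R : Type*} [Ring R] [LinearOrder R] [IsStrictOrderedRing R]
    (v : ι → R) : 0 ≤ v ⬝ᵥ v :=
  Finset.sum_nonneg fun i _ => mul_self_nonneg (v i)

theorem two_mul_abs_dotProduct_le (p q : ι → ℝ) : 2 * |p ⬝ᵥ q| ≤ p ⬝ᵥ p + q ⬝ᵥ q := by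
  have h₁ := dotProduct_self_nonneg (p + q)
  have h₂ := dotProduct_self_nonneg (p - q)
  simp only [add_dotProduct, dotProduct_add, sub_dotProduct, dotProduct_sub,
    dotProduct_comm q p] at h₁ h₂
  cases abs_cases (p ⬝ᵥ q) <;> linarith

theorem Matrix.IsSymm.dotProduct_mulVec_comm {L : Matrix ι ι ℝ} (hL : L.IsSymm) (v w : ι → ℝ) :
    v ⬝ᵥ (L *ᵥ w) = (L *ᵥ v) ⬝ᵥ w := by
  rw [dotProduct_mulVec, ← mulVec_transpose, hL.eq]

theorem dotProduct_mul_transpose_mulVec {κ : Type*} [Fintype κ] (B : Matrix ι κ ℝ) (v : ι → ℝ) :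
    v ⬝ᵥ ((B * Bᵀ) *ᵥ v) = (Bᵀ *ᵥ v) ⬝ᵥ (Bᵀ *ᵥ v) := by
  rw [← mulVec_mulVec, dotProduct_mulVec, ← mulVec_transpose]

theorem tendsto_zero_of_tendsto_dotProduct_self {α : Type*} {l : Filter α} {f : α → ι → ℝ}
    (hf : Tendsto (fun t => f t ⬝ᵥ f t) l (𝓝 0)) : Tendsto f l (𝓝 0) := by
  refine tendsto_pi_nhds.2 fun i => (tendsto_zero_iff_abs_tendsto_zero _).2 ?_
  have hsq : Tendsto (fun t => f t i ^ 2) l (𝓝 0) :=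
    squeeze_zero (fun t => sq_nonneg _) (fun t => (sq (f t i)).trans_le <|
      Finset.single_le_sum (fun j _ => mul_self_nonneg (f t j)) (Finset.mem_univ i)) hf
  simpa only [Real.sqrt_sq_eq_abs, Real.sqrt_zero, Function.comp_def] using hsq.sqrt

theorem Filter.Tendsto.const_mulVec {α κ : Type*} {l : Filter α} {f : α → ι → ℝ} {v : ι → ℝ}
    (M : Matrix κ ι ℝ) (hf : Tendsto f l (𝓝 v)) : Tendsto (fun t => M *ᵥ f t) l (𝓝 (M *ᵥ v)) :=
  ((continuous_const.matrix_mulVec continuous_id).tendsto v).comp hf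

theorem exists_pos_mul_dotProduct_self_le (M : Matrix ι ι ℝ) (W : Submodule ℝ (ι → ℝ))
    (hM : ∀ v ∈ W, v ≠ 0 → 0 < v ⬝ᵥ (M *ᵥ v)) :
    ∃ lam > 0, ∀ v ∈ W, lam * (v ⬝ᵥ v) ≤ v ⬝ᵥ (M *ᵥ v) := by
  set S : Set (ι → ℝ) := W ∩ {v | v ⬝ᵥ v = 1}
  have hscale : ∀ μ, (∀ w ∈ S, μ ≤ w ⬝ᵥ (M *ᵥ w)) → ∀ v ∈ W, μ * (v ⬝ᵥ v) ≤ v ⬝ᵥ (M *ᵥ v) := by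
    intro μ hμ v hv
    rcases eq_or_ne v 0 with rfl | hv0
    · simp
    have hvv : 0 < v ⬝ᵥ v :=
      (dotProduct_self_nonneg v).lt_of_ne (Ne.symm (dotProduct_self_eq_zero.not.2 hv0))
    set r := Real.sqrt (v ⬝ᵥ v)
    have hr : 0 < r := Real.sqrt_pos.2 hvv
    have hrr : r * r = v ⬝ᵥ v := Real.mul_self_sqrt hvv.le
    have h := hμ (r⁻¹ • v) ⟨W.smul_mem _ hv, by
      simp only [Set.mem_ofPred_eq, smul_dotProduct, dotProduct_smul, smul_eq_mul, ← hrr]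
      field_simp⟩
    simp only [mulVec_smul, smul_dotProduct, dotProduct_smul, smul_eq_mul] at h
    rw [← hrr]
    calc μ * (r * r) ≤ r⁻¹ * (r⁻¹ * v ⬝ᵥ (M *ᵥ v)) * (r * r) := by gcongr
      _ = v ⬝ᵥ (M *ᵥ v) := by field_simp
  have hS : IsCompact S := by
    refine (isCompact_closedBall (0 : ι → ℝ) 1).of_isClosed_subset
      (W.closed_of_finiteDimensional.inter (isClosed_eq (by fun_prop) continuous_const)) ?_
    rintro v ⟨-, hv⟩
    refine mem_closedBall_zero_iff.2 ((pi_norm_le_iff_of_nonneg zero_le_one).2 fun i => ?_)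
    rw [Real.norm_eq_abs, abs_le_one_iff_mul_self_le_one, ← Set.mem_ofPred.1 hv]
    exact Finset.single_le_sum (fun j _ => mul_self_nonneg (v j)) (Finset.mem_univ i)
  rcases S.eq_empty_or_nonempty with hS0 | hSne
  · exact ⟨1, one_pos, hscale 1 (by simp [hS0])⟩
  · obtain ⟨w, ⟨hwW, hw⟩, hmin⟩ := hS.exists_isMinOn hSne
      (by fun_prop : Continuous fun v => v ⬝ᵥ (M *ᵥ v)).continuousOn
    refine ⟨_, hM w hwW ?_, hscale _ fun v hv => hmin hv⟩
    rintro rfl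
    simp at hw

end DotProduct

section Calculus

variable {ι : Type*} [Fintype ι]

theorem HasDerivAt.dotProduct {f g : ℝ → ι → ℝ} {f' g' : ι → ℝ} {t : ℝ}
    (hf : HasDerivAt f f' t) (hg : HasDerivAt g g' t) :
    HasDerivAt (fun s => f s ⬝ᵥ g s) (f' ⬝ᵥ g t + f t ⬝ᵥ g') t := by
  have h : HasDerivAt (fun s => ∑ i, f s i * g s i) (∑ i, (f' i * g t i + f t i * g' i)) t :=
    HasDerivAt.fun_sum fun i _ => (hasDerivAt_pi.1 hf i).fun_mul (hasDerivAt_pi.1 hg i)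
  simpa only [_root_.dotProduct, Finset.sum_add_distrib] using h

theorem HasDerivAt.mulVec {κ : Type*} (M : Matrix κ ι ℝ) {f : ℝ → ι → ℝ} {f' : ι → ℝ} {t : ℝ}
    (hf : HasDerivAt f f' t) : HasDerivAt (fun s => M *ᵥ f s) (M *ᵥ f') t :=
  hasDerivAt_pi.2 fun i => HasDerivAt.fun_sum fun j _ => (hasDerivAt_pi.1 hf j).const_mul (M i j)

theorem sum_apply_eq_of_hasDerivAt {f f' : ℝ → ι → ℝ}
    (hf : ∀ t, 0 ≤ t → HasDerivAt f (f' t) t) (hf' : ∀ t, 0 ≤ t → ∑ i, f' t i = 0)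
    {t : ℝ} (ht : 0 ≤ t) : ∑ i, f t i = ∑ i, f 0 i := by
  have hsum : ∀ s ∈ Set.Icc 0 t, HasDerivAt (fun s => ∑ i, f s i) 0 s := fun s hs =>
    hf' s hs.1 ▸ HasDerivAt.fun_sum fun i _ => hasDerivAt_pi.1 (hf s hs.1) i
  exact constant_of_has_deriv_right_zero (fun s hs => (hsum s hs).continuousAt.continuousWithinAt)
    (fun s hs => (hsum s (Set.Ico_subset_Icc_self hs)).hasDerivWithinAt) t ⟨ht, le_rfl⟩

end Calculus

theorem HasDerivAt.reindex {ι κ : Type*} [Fintype κ] {z : ℝ → ι → ℝ} {z' : ι → ℝ} {t : ℝ}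
    (hz : HasDerivAt z z' t) (g : κ → ι) : HasDerivAt (fun s => z s ∘ g) (z' ∘ g) t :=
  hasDerivAt_pi.2 fun i => hasDerivAt_pi.1 hz (g i)

theorem le_mul_exp_of_hasDerivAt_le_neg_mul {f f' : ℝ → ℝ} {γ : ℝ}
    (hf : ∀ t, 0 ≤ t → HasDerivAt f (f' t) t) (hf' : ∀ t, 0 ≤ t → f' t ≤ -γ * f t)
    {t : ℝ} (ht : 0 ≤ t) : f t ≤ f 0 * Real.exp (-γ * t) := by
  set g : ℝ → ℝ := fun s => f s * Real.exp (γ * s)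
  have hg : ∀ s, 0 ≤ s → HasDerivAt g ((f' s + γ * f s) * Real.exp (γ * s)) s := fun s hs =>
    ((hf s hs).fun_mul ((hasDerivAt_id' s).const_mul γ).exp).congr_deriv (by ring)
  have hanti : AntitoneOn g (Set.Ici 0) := by
    refine antitoneOn_of_hasDerivWithinAt_nonpos (convex_Ici 0)
      (fun s hs => (hg s hs).continuousAt.continuousWithinAt)
      (fun s hs => (hg s (interior_subset hs)).hasDerivWithinAt) fun s hs => ?_
    have := hf' s (interior_subset hs)
    exact mul_nonpos_of_nonpos_of_nonneg (by linarith) (Real.exp_pos _).le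
  have hgt : g t ≤ g 0 := hanti Set.self_mem_Ici ht ht
  calc f t = g t * Real.exp (-γ * t) := by simp [g, mul_assoc, ← Real.exp_add]
    _ ≤ f 0 * Real.exp (-γ * t) := by
      simpa [g] using mul_le_mul_of_nonneg_right hgt (Real.exp_pos (-γ * t)).le

theorem SimpleGraph.Reachable.eq_of_forall_adj {V α : Type*} {G : SimpleGraph V} {f : V → α}
    (hf : ∀ i j, G.Adj i j → f i = f j) {u v : V} (huv : G.Reachable u v) : f u = f v := by
  obtain ⟨w⟩ := huv
  induction w with
  | nil => rfl
  | cons hadj _ ih => exact (hf _ _ hadj).trans ih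

section Incidence

variable {V E : Type*} [Fintype V] [DecidableEq V] (src tgt : E → V)

def incidenceMatrix : Matrix V E ℝ := fun i l =>
  if i = src l then 1 else if i = tgt l then -1 else 0

variable {src tgt}

theorem incidenceMatrix_transpose_mulVec_apply (hloop : ∀ l, src l ≠ tgt l) (v : V → ℝ) (l : E) :
    ((incidenceMatrix src tgt)ᵀ *ᵥ v) l = v (src l) - v (tgt l) := by
  have h : ∀ i, incidenceMatrix src tgt i l * v i =
      (if i = src l then v i else 0) - (if i = tgt l then v i else 0) := fun i => by
    by_cases hs : i = src l
    · simp [incidenceMatrix, hs, hloop l]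
    · by_cases ht : i = tgt l <;> simp [incidenceMatrix, hs, ht, (hloop l).symm]
  simp only [mulVec, dotProduct, transpose_apply, h, Finset.sum_sub_distrib,
    Finset.sum_ite_eq', Finset.mem_univ, if_true]

theorem incidenceMatrix_transpose_mulVec_const (hloop : ∀ l, src l ≠ tgt l) (x : ℝ) :
    (incidenceMatrix src tgt)ᵀ *ᵥ (fun _ => x) = 0 :=
  funext fun l => (incidenceMatrix_transpose_mulVec_apply hloop _ l).trans (sub_self x)

theorem incidenceMatrix_mul_transpose_mulVec_const [Fintype E] (hloop : ∀ l, src l ≠ tgt l)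
    (x : ℝ) : (incidenceMatrix src tgt * (incidenceMatrix src tgt)ᵀ) *ᵥ (fun _ => x) = 0 := by
  rw [← mulVec_mulVec, incidenceMatrix_transpose_mulVec_const hloop, mulVec_zero]

theorem eq_of_incidenceMatrix_transpose_mulVec_eq_zero {G : SimpleGraph V} (hG : G.Connected)
    (hsurj : ∀ e ∈ G.edgeSet, ∃ l, s(src l, tgt l) = e) (hloop : ∀ l, src l ≠ tgt l)
    {v : V → ℝ} (hv : (incidenceMatrix src tgt)ᵀ *ᵥ v = 0) (i j : V) : v i = v j := by
  refine (hG.preconnected i j).eq_of_forall_adj fun i j hij => ?_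
  obtain ⟨l, hl⟩ := hsurj s(i, j) hij
  have := incidenceMatrix_transpose_mulVec_apply hloop v l
  rw [hv, Pi.zero_apply] at this
  rcases Sym2.eq_iff.1 hl with ⟨rfl, rfl⟩ | ⟨rfl, rfl⟩ <;> linarith

theorem incidenceMatrix_dotProduct_mul_transpose_mulVec_pos [Fintype E] {G : SimpleGraph V}
    (hG : G.Connected) (hsurj : ∀ e ∈ G.edgeSet, ∃ l, s(src l, tgt l) = e)
    (hloop : ∀ l, src l ≠ tgt l) {v : V → ℝ} (hsum : ∑ i, v i = 0) (hv : v ≠ 0) :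
    0 < v ⬝ᵥ ((incidenceMatrix src tgt * (incidenceMatrix src tgt)ᵀ) *ᵥ v) := by
  rw [dotProduct_mul_transpose_mulVec]
  refine (dotProduct_self_nonneg _).lt_of_ne fun h => hv (funext fun i => ?_)
  have hconst := eq_of_incidenceMatrix_transpose_mulVec_eq_zero hG hsurj hloop
    (dotProduct_self_eq_zero.1 h.symm) i
  rw [Finset.sum_congr rfl fun j _ => (hconst j).symm, Finset.sum_const, Finset.card_univ,
    nsmul_eq_mul] at hsum
  have : Nonempty V := ⟨i⟩
  exact (mul_eq_zero.1 hsum).resolve_left (Nat.cast_ne_zero.2 Fintype.card_ne_zero)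

end Incidence

section Lyapunov

variable {ι : Type*} [Fintype ι] {L : Matrix ι ι ℝ} {a b c lam : ℝ}

theorem mul_dotProduct_mulVec_le (hlam : 0 < lam) {p : ι → ℝ}
    (hp : lam * (p ⬝ᵥ p) ≤ p ⬝ᵥ (L *ᵥ p)) : lam * (p ⬝ᵥ (L *ᵥ p)) ≤ (L *ᵥ p) ⬝ᵥ (L *ᵥ p) := by
  have hcs : (p ⬝ᵥ (L *ᵥ p)) ^ 2 ≤ (p ⬝ᵥ p) * ((L *ᵥ p) ⬝ᵥ (L *ᵥ p)) := by
    simpa only [dotProduct, pow_two] using Finset.sum_mul_sq_le_sq_mul_sq Finset.univ p (L *ᵥ p)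
  have hP : 0 ≤ p ⬝ᵥ (L *ᵥ p) := (mul_nonneg hlam.le (dotProduct_self_nonneg p)).trans hp
  rcases hP.eq_or_lt with hP0 | hPpos
  · rw [← hP0, mul_zero]
    exact dotProduct_self_nonneg _
  · nlinarith [mul_le_mul_of_nonneg_right hp (dotProduct_self_nonneg (L *ᵥ p))]

variable (L a b c) in
/-- The energy `pᵀ L p + b |q|²` is only nonincreasing along the error dynamics; the cross term
`- 2 c pᵀ q` makes its decay strict, and `a c |q|²` cancels the indefinite terms it adds to the
derivative. -/
def crossLyapunov (p q : ι → ℝ) : ℝ :=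
  p ⬝ᵥ (L *ᵥ p) - 2 * c * (p ⬝ᵥ q) + (b + a * c) * (q ⬝ᵥ q)

theorem hasDerivAt_crossLyapunov (hL : L.IsSymm) {p q : ℝ → ι → ℝ} {t : ℝ}
    (hp : HasDerivAt p (-(a • (L *ᵥ p t)) + b • q t) t) (hq : HasDerivAt q (-(L *ᵥ p t)) t) :
    HasDerivAt (fun s => crossLyapunov L a b c (p s) (q s))
      (-2 * a * ((L *ᵥ p t) ⬝ᵥ (L *ᵥ p t)) + 2 * c * (p t ⬝ᵥ (L *ᵥ p t))
        - 2 * b * c * (q t ⬝ᵥ q t)) t := by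
  have hLp := hp.dotProduct (hp.mulVec L)
  have hpq := hp.dotProduct hq
  have hqq := hq.dotProduct hq
  refine ((hLp.sub (hpq.const_mul (2 * c))).add (hqq.const_mul (b + a * c))).congr_deriv ?_
  simp only [mulVec_add, mulVec_neg, mulVec_smul, add_dotProduct, neg_dotProduct,
    smul_dotProduct, dotProduct_add, dotProduct_neg, dotProduct_smul, smul_eq_mul,
    hL.dotProduct_mulVec_comm (p t), dotProduct_comm (q t)]
  ring

theorem crossLyapunov_le (hlam : 0 < lam) (hc : 0 ≤ c) {p : ι → ℝ}
    (hp : lam * (p ⬝ᵥ p) ≤ p ⬝ᵥ (L *ᵥ p)) (q : ι → ℝ) :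
    crossLyapunov L a b c p q ≤ (1 + c / lam) * (p ⬝ᵥ (L *ᵥ p)) + (b + a * c + c) * (q ⬝ᵥ q) := by
  have hpp : c * (p ⬝ᵥ p) ≤ c / lam * (p ⬝ᵥ (L *ᵥ p)) := by
    rw [div_mul_eq_mul_div, le_div_iff₀ hlam]
    nlinarith
  have := mul_le_mul_of_nonneg_left (two_mul_abs_dotProduct_le p q) hc
  have := mul_le_mul_of_nonneg_left (neg_abs_le (p ⬝ᵥ q)) hc
  unfold crossLyapunov
  linarith

theorem le_crossLyapunov (ha : 0 ≤ a) (hc : 0 ≤ c) (hcl : c ≤ lam / 2) (hcb : c ≤ b / 2)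
    {p : ι → ℝ} (hp : lam * (p ⬝ᵥ p) ≤ p ⬝ᵥ (L *ᵥ p)) (q : ι → ℝ) :
    min lam b / 2 * (p ⬝ᵥ p + q ⬝ᵥ q) ≤ crossLyapunov L a b c p q := by
  have := mul_le_mul_of_nonneg_right (min_le_left lam b) (dotProduct_self_nonneg p)
  have := mul_le_mul_of_nonneg_right (min_le_right lam b) (dotProduct_self_nonneg q)
  have := mul_le_mul_of_nonneg_left (two_mul_abs_dotProduct_le p q) hc
  have := mul_le_mul_of_nonneg_left (le_abs_self (p ⬝ᵥ q)) hc
  have := mul_nonneg (sub_nonneg.2 hcl) (dotProduct_self_nonneg p)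
  have := mul_nonneg (sub_nonneg.2 hcb) (dotProduct_self_nonneg q)
  have := mul_nonneg (mul_nonneg ha hc) (dotProduct_self_nonneg q)
  unfold crossLyapunov
  linarith

theorem exists_pos_forall_le_neg_mul_crossLyapunov (ha : 0 < a) (hlam : 0 < lam) (hc : 0 < c)
    (hca : c < a * lam) (hb : 0 < b) :
    ∃ γ > 0, ∀ p q : ι → ℝ, lam * (p ⬝ᵥ p) ≤ p ⬝ᵥ (L *ᵥ p) →
      -2 * a * ((L *ᵥ p) ⬝ᵥ (L *ᵥ p)) + 2 * c * (p ⬝ᵥ (L *ᵥ p)) - 2 * b * c * (q ⬝ᵥ q) ≤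
        -γ * crossLyapunov L a b c p q := by
  set K₁ := 1 + c / lam
  set K₂ := b + a * c + c
  set γ := min (2 * (a * lam - c) / K₁) (2 * b * c / K₂)
  refine ⟨γ, lt_min (div_pos (by linarith) (by positivity)) (by positivity), fun p q hp => ?_⟩
  have hR := mul_le_mul_of_nonneg_left (mul_dotProduct_mulVec_le hlam hp) ha.le
  have hV := mul_le_mul_of_nonneg_left (crossLyapunov_le (a := a) (b := b) hlam hc.le hp q)
    (le_min (by positivity) (by positivity) : 0 ≤ γ)
  have hP := (mul_nonneg hlam.le (dotProduct_self_nonneg p)).trans hp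
  have h₁ : γ * K₁ ≤ 2 * (a * lam - c) := (le_div_iff₀ (by positivity)).1 (min_le_left _ _)
  have h₂ : γ * K₂ ≤ 2 * b * c := (le_div_iff₀ (by positivity)).1 (min_le_right _ _)
  nlinarith [mul_le_mul_of_nonneg_right h₁ hP,
    mul_le_mul_of_nonneg_right h₂ (dotProduct_self_nonneg q)]

theorem tendsto_zero_of_hasDerivAt_of_coercive (hL : L.IsSymm) (ha : 0 < a) (hb : 0 < b)
    (hlam : 0 < lam) {p q : ℝ → ι → ℝ}
    (hp : ∀ t, 0 ≤ t → HasDerivAt p (-(a • (L *ᵥ p t)) + b • q t) t)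
    (hq : ∀ t, 0 ≤ t → HasDerivAt q (-(L *ᵥ p t)) t)
    (hcoer : ∀ t, 0 ≤ t → lam * (p t ⬝ᵥ p t) ≤ p t ⬝ᵥ (L *ᵥ p t)) :
    Tendsto p atTop (𝓝 0) ∧ Tendsto q atTop (𝓝 0) := by
  obtain ⟨c, hc, hca, hcl, hcb⟩ : ∃ c, 0 < c ∧ c < a * lam ∧ c ≤ lam / 2 ∧ c ≤ b / 2 := by
    refine ⟨min (a * lam) (min lam b) / 2, by positivity, ?_, ?_, ?_⟩
    · nlinarith [min_le_left (a * lam) (min lam b), mul_pos ha hlam]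
    · linarith [(min_le_right (a * lam) (min lam b)).trans (min_le_left lam b)]
    · linarith [(min_le_right (a * lam) (min lam b)).trans (min_le_right lam b)]
  obtain ⟨γ, hγ, hdecay⟩ :=
    exists_pos_forall_le_neg_mul_crossLyapunov (L := L) ha hlam hc hca hb
  set V : ℝ → ℝ := fun t => crossLyapunov L a b c (p t) (q t)
  have hκ : 0 < min lam b / 2 := by positivity
  have hlow : ∀ t, 0 ≤ t → min lam b / 2 * (p t ⬝ᵥ p t + q t ⬝ᵥ q t) ≤ V t := fun t ht =>
    le_crossLyapunov ha.le hc.le hcl hcb (hcoer t ht) (q t)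
  have hV : Tendsto V atTop (𝓝 0) := by
    have hexp : Tendsto (fun t => V 0 * Real.exp (-γ * t)) atTop (𝓝 0) := by
      simpa using (Real.tendsto_exp_atBot.comp
        (tendsto_id.const_mul_atTop_of_neg (neg_neg_of_pos hγ))).const_mul (V 0)
    refine squeeze_zero' (eventually_atTop.2 ⟨0, fun t ht => ?_⟩)
      (eventually_atTop.2 ⟨0, fun t ht => ?_⟩) hexp
    · exact (mul_nonneg hκ.le (add_nonneg (dotProduct_self_nonneg _)
        (dotProduct_self_nonneg _))).trans (hlow t ht)
    · exact le_mul_exp_of_hasDerivAt_le_neg_mul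
        (fun t ht => hasDerivAt_crossLyapunov hL (hp t ht) (hq t ht))
        (fun t ht => hdecay _ _ (hcoer t ht)) ht
  have hsum : Tendsto (fun t => p t ⬝ᵥ p t + q t ⬝ᵥ q t) atTop (𝓝 0) :=
    squeeze_zero' (Eventually.of_forall fun t => add_nonneg (dotProduct_self_nonneg _)
      (dotProduct_self_nonneg _)) (eventually_atTop.2 ⟨0, fun t ht =>
        (le_div_iff₀' hκ).2 (hlow t ht)⟩) (by simpa using hV.div_const (min lam b / 2))
  constructor <;> refine tendsto_zero_of_tendsto_dotProduct_self
    (squeeze_zero (fun t => dotProduct_self_nonneg _) (fun t => ?_) hsum)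
  · linarith [dotProduct_self_nonneg (q t)]
  · linarith [dotProduct_self_nonneg (p t)]

end Lyapunov

section SteadyState

variable {ι : Type*} {L : Matrix ι ι ℝ} {a b : ℝ}

noncomputable def steadyState (b μ : ℝ) (u : ι → ℝ) (t : ℝ) : ι ⊕ ι → ℝ :=
  Sum.elim (fun _ => μ * t) (b⁻¹ • ((fun _ => μ) - u))

theorem hasDerivAt_steadyState (b μ : ℝ) (u : ι → ℝ) (t : ℝ) :
    HasDerivAt (steadyState b μ u) (Sum.elim (fun _ => μ) 0) t :=
  hasDerivAt_pi.2 fun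
    | .inl _ => ((hasDerivAt_id' t).const_mul μ).congr_deriv (mul_one μ)
    | .inr _ => hasDerivAt_const t _

variable [Fintype ι] [DecidableEq ι]

theorem fromBlocks_mulVec_steadyState (hLc : ∀ c, L *ᵥ (fun _ => c) = 0) (hb : b ≠ 0)
    (μ : ℝ) (u : ι → ℝ) (t : ℝ) :
    fromBlocks (-(a • L)) (b • 1) (-L) 0 *ᵥ steadyState b μ u t + fromRows 1 0 *ᵥ u =
      Sum.elim (fun _ => μ) 0 := by
  ext (i | i) <;>
    simp [steadyState, fromBlocks_mulVec, fromRows_mulVec, neg_mulVec, smul_mulVec, hLc, hb]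

theorem fromCols_mulVec_steadyState (hLc : ∀ c, L *ᵥ (fun _ => c) = 0) (hb : b ≠ 0)
    (μ : ℝ) (u : ι → ℝ) (t : ℝ) :
    fromCols (-(a • L)) (b • 1) *ᵥ steadyState b μ u t + u = fun _ => μ := by
  ext i
  simp [steadyState, fromCols_mulVec, neg_mulVec, smul_mulVec, hLc, hb]

theorem tendsto_sub_steadyState (hL : L.IsSymm) (hLc : ∀ c, L *ᵥ (fun _ => c) = 0)
    (ha : 0 < a) (hb : 0 < b) {lam : ℝ} (hlam : 0 < lam)
    (hcoer : ∀ v : ι → ℝ, ∑ i, v i = 0 → lam * (v ⬝ᵥ v) ≤ v ⬝ᵥ (L *ᵥ v))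
    {u : ι → ℝ} {μ : ℝ} (hμ : Fintype.card ι * μ = ∑ i, u i) {x : ℝ → ι ⊕ ι → ℝ} (hx0 : x 0 = 0)
    (hx : ∀ t, 0 ≤ t →
      HasDerivAt x (fromBlocks (-(a • L)) (b • 1) (-L) 0 *ᵥ x t + fromRows 1 0 *ᵥ u) t) :
    Tendsto (fun t => x t - steadyState b μ u t) atTop (𝓝 0) := by
  set z := fun t => x t - steadyState b μ u t
  have hz : ∀ t, 0 ≤ t → HasDerivAt z (fromBlocks (-(a • L)) (b • 1) (-L) 0 *ᵥ z t) t :=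
    fun t ht => ((hx t ht).sub (hasDerivAt_steadyState b μ u t)).congr_deriv <| by
      rw [← fromBlocks_mulVec_steadyState hLc hb.ne' μ u t, mulVec_sub]
      abel
  have hp : ∀ t, 0 ≤ t → HasDerivAt (fun s => z s ∘ Sum.inl)
      (-(a • (L *ᵥ (z t ∘ Sum.inl))) + b • (z t ∘ Sum.inr)) t := fun t ht => by
    simpa [fromBlocks_mulVec, neg_mulVec, smul_mulVec] using (hz t ht).reindex Sum.inl
  have hq : ∀ t, 0 ≤ t → HasDerivAt (fun s => z s ∘ Sum.inr) (-(L *ᵥ (z t ∘ Sum.inl))) t :=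
    fun t ht => by simpa [fromBlocks_mulVec, neg_mulVec] using (hz t ht).reindex Sum.inr
  have hsumL : ∀ v, ∑ i, (L *ᵥ v) i = 0 := fun v => by
    rw [← one_dotProduct, hL.dotProduct_mulVec_comm, Pi.one_def, hLc, zero_dotProduct]
  have hsum_q : ∀ t, 0 ≤ t → ∑ i, z t (Sum.inr i) = 0 := fun t ht => by
    refine (sum_apply_eq_of_hasDerivAt hq (fun s _ => ?_) ht).trans ?_
    · simp [hsumL]
    · simp [z, hx0, steadyState, Finset.sum_sub_distrib, ← Finset.mul_sum, hμ]
  have hsum_p : ∀ t, 0 ≤ t → ∑ i, z t (Sum.inl i) = 0 := fun t ht => by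
    refine (sum_apply_eq_of_hasDerivAt hp (fun s hs => ?_) ht).trans ?_
    · simp [Finset.sum_add_distrib, ← Finset.mul_sum, hsumL, hsum_q s hs]
    · simp [z, hx0, steadyState]
  obtain ⟨hp0, hq0⟩ := tendsto_zero_of_hasDerivAt_of_coercive hL ha hb hlam hp hq
    fun t ht => hcoer _ (hsum_p t ht)
  exact tendsto_pi_nhds.2 fun
    | .inl i => tendsto_pi_nhds.1 hp0 i
    | .inr i => tendsto_pi_nhds.1 hq0 i

end SteadyState

theorem stmt11_general
    (n m : ℕ) (hn : 2 ≤ n)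
    (G : SimpleGraph (Fin n)) (hG : G.Connected)
    (src tgt : Fin m → Fin n)
    (hadj : ∀ l, G.Adj (src l) (tgt l))
    (hsurj : ∀ e ∈ G.edgeSet, ∃ l : Fin m, s(src l, tgt l) = e)
    (B : Matrix (Fin n) (Fin m) ℝ)
    (hB : ∀ i l, B i l = if i = src l then (1 : ℝ) else if i = tgt l then -1 else 0)
    (L : Matrix (Fin n) (Fin n) ℝ) (hL : L = B * Bᵀ)
    (a b : ℝ) (ha : 0 < a) (hb : 0 < b)
    (ωu : Fin n → ℝ)
    (A : Matrix (Fin n ⊕ Fin n) (Fin n ⊕ Fin n) ℝ)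
    (hA : A = Matrix.fromBlocks (-(a • L)) (b • (1 : Matrix (Fin n) (Fin n) ℝ)) (-L) 0)
    (B2 : Matrix (Fin n ⊕ Fin n) (Fin n) ℝ)
    (hB2 : B2 = Matrix.fromRows (1 : Matrix (Fin n) (Fin n) ℝ) 0)
    (C1 : Matrix (Fin n) (Fin n ⊕ Fin n) ℝ)
    (hC1 : C1 = Matrix.fromCols (-(a • L)) (b • (1 : Matrix (Fin n) (Fin n) ℝ)))
    (C2 : Matrix (Fin m) (Fin n ⊕ Fin n) ℝ)
    (hC2 : C2 = Matrix.fromCols (-Bᵀ) 0)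
    (x : ℝ → (Fin n ⊕ Fin n) → ℝ)
    (hx0 : x 0 = 0)
    (hx : ∀ t : ℝ, 0 ≤ t → HasDerivAt x (A *ᵥ x t + B2 *ᵥ ωu) t)
    (ω : ℝ → Fin n → ℝ) (hω : ∀ t, ω t = C1 *ᵥ x t + ωu)
    (δ : ℝ → Fin m → ℝ) (hδ : ∀ t, δ t = C2 *ᵥ x t)
    (ωavg : ℝ) (hωavg : ωavg = (1 / (n : ℝ)) * ∑ i, ωu i)
    (ωss : Fin n → ℝ) (hωss : ωss = fun _ => ωavg)
    :
    Tendsto ω atTop (𝓝 ωss) ∧ Tendsto δ atTop (𝓝 0) := by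
  have hloop : ∀ l, src l ≠ tgt l := fun l => (hadj l).ne
  obtain rfl : B = incidenceMatrix src tgt := Matrix.ext hB
  subst hL hA hB2 hC1 hC2 hωss
  have hLc := incidenceMatrix_mul_transpose_mulVec_const hloop
  have hsymm : (incidenceMatrix src tgt * (incidenceMatrix src tgt)ᵀ).IsSymm := by
    rw [IsSymm, transpose_mul, transpose_transpose]
  obtain ⟨lam, hlam, hcoer⟩ := exists_pos_mul_dotProduct_self_le _
    (LinearMap.ker (dotProductBilin ℝ ℝ (1 : Fin n → ℝ))) fun v hv hv0 =>
      incidenceMatrix_dotProduct_mul_transpose_mulVec_pos hG hsurj hloop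
        (by simpa [one_dotProduct] using LinearMap.mem_ker.1 hv) hv0
  have hμ : Fintype.card (Fin n) * ωavg = ∑ i, ωu i := by
    have : (n : ℝ) ≠ 0 := Nat.cast_ne_zero.2 (by omega)
    rw [hωavg, Fintype.card_fin]
    field_simp
  have hz := tendsto_sub_steadyState hsymm hLc ha hb hlam
    (fun v hv => hcoer v (LinearMap.mem_ker.2 (by simpa [one_dotProduct] using hv))) hμ hx0 hx
  have hω' : ∀ t, ω t = fromCols (-(a • (incidenceMatrix src tgt * (incidenceMatrix src tgt)ᵀ)))
      (b • 1) *ᵥ (x t - steadyState b ωavg ωu t) + fun _ => ωavg := fun t => by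
    rw [hω, mulVec_sub, ← fromCols_mulVec_steadyState hLc hb.ne' ωavg ωu t]
    abel
  have hδ' : ∀ t, δ t =
      fromCols (-(incidenceMatrix src tgt)ᵀ) 0 *ᵥ (x t - steadyState b ωavg ωu t) := fun t => by
    simp [hδ, mulVec_sub, steadyState, fromCols_mulVec, neg_mulVec,
      incidenceMatrix_transpose_mulVec_const hloop]
  refine ⟨(funext hω').symm ▸ ?_, (funext hδ').symm ▸ ?_⟩
  · simpa only [mulVec_zero, zero_add] using (hz.const_mulVec _).add_const (fun _ => ωavg)
  · simpa only [mulVec_zero] using hz.const_mulVec _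

theorem stmt11
    (n m : ℕ) (hn : 2 ≤ n)
    (G : SimpleGraph (Fin n)) (hG : G.Connected)
    (src tgt : Fin m → Fin n)
    (hadj : ∀ l, G.Adj (src l) (tgt l))
    (hinj : ∀ l l' : Fin m, s(src l, tgt l) = s(src l', tgt l') → l = l')
    (hsurj : ∀ e ∈ G.edgeSet, ∃ l : Fin m, s(src l, tgt l) = e)
    (B : Matrix (Fin n) (Fin m) ℝ)
    (hB : ∀ i l, B i l = if i = src l then (1 : ℝ) else if i = tgt l then -1 else 0)
    (L : Matrix (Fin n) (Fin n) ℝ) (hL : L = B * Bᵀ)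
    (a b : ℝ) (ha : 0 < a) (hb : 0 < b)
    (ωu : Fin n → ℝ)
    (A : Matrix (Fin n ⊕ Fin n) (Fin n ⊕ Fin n) ℝ)
    (hA : A = Matrix.fromBlocks (-(a • L)) (b • (1 : Matrix (Fin n) (Fin n) ℝ)) (-L) 0)
    (B2 : Matrix (Fin n ⊕ Fin n) (Fin n) ℝ)
    (hB2 : B2 = Matrix.fromRows (1 : Matrix (Fin n) (Fin n) ℝ) 0)
    (C1 : Matrix (Fin n) (Fin n ⊕ Fin n) ℝ)
    (hC1 : C1 = Matrix.fromCols (-(a • L)) (b • (1 : Matrix (Fin n) (Fin n) ℝ)))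
    (C2 : Matrix (Fin m) (Fin n ⊕ Fin n) ℝ)
    (hC2 : C2 = Matrix.fromCols (-Bᵀ) 0)
    (x : ℝ → (Fin n ⊕ Fin n) → ℝ)
    (hx0 : x 0 = 0)
    (hx : ∀ t : ℝ, 0 ≤ t → HasDerivAt x (A *ᵥ x t + B2 *ᵥ ωu) t)
    (ω : ℝ → Fin n → ℝ) (hω : ∀ t, ω t = C1 *ᵥ x t + ωu)
    (δ : ℝ → Fin m → ℝ) (hδ : ∀ t, δ t = C2 *ᵥ x t)
    (ωavg : ℝ) (hωavg : ωavg = (1 / (n : ℝ)) * ∑ i, ωu i)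
    (ωss : Fin n → ℝ) (hωss : ωss = fun _ => ωavg)
    :
    Tendsto ω atTop (𝓝 ωss) ∧ Tendsto δ atTop (𝓝 0) :=
  stmt11_general n m hn G hG src tgt hadj hsurj B hB L hL a b ha hb ωu A hA B2 hB2 C1 hC1 C2 hC2 x
    hx0 hx ω hω δ hδ ωavg hωavg ωss hωss
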